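/- Let r ≥ 2, m ≥ r+2, and let y_1,…,y_{r+2} ∈ R_m be linearly independent affine forms. Then w(ev(y_1⋯y_{r−2}·(y_{r−1}y_r + y_{r+1}y_{r+2}))) = 3·2^{m−r−1}, where the product y_1⋯y_{r−2} is the empty product 1 when r = 2. -/

import Mathlib

open Finset Pointwise

/-- Points of the affine space `F_2^m`. -/
abbrev Point (m : ℕ) := Fin m → ZMod 2

/-- The ring `R_m = F_2[x_0,…,x_{m-1}]/(x_i^2 - x_i)`, identified with the ring of
functions `F_2^m → F_2` via the evaluation isomorphism `ev`. -/
abbrev Fn (m : ℕ) := Point m → ZMod 2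

/-- The monomial `∏_{i ∈ S} x_i` (as the function it evaluates to). -/
def monFn (m : ℕ) (S : Finset (Fin m)) : Fn m := fun u => ∏ i ∈ S, u i

/-- Hamming weight of `ev(P)`: the number of points where `P` takes the value 1. -/
def wt (m : ℕ) (P : Fn m) : ℕ := (Finset.univ.filter fun u => P u = 1).card

/-- The monomial code `C(I)`: the `F_2`-span of the evaluations of the monomials in `I`. -/
def code (m : ℕ) (I : Set (Finset (Fin m))) : Submodule (ZMod 2) (Fn m) :=
  Submodule.span (ZMod 2) (monFn m '' I)

/-- `f ≼_sh g` for monomials of equal degree: the sorted index lists compare entrywise. -/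
def shLE (m : ℕ) (S T : Finset (Fin m)) : Prop :=
  S.card = T.card ∧
    ∀ (ℓ : ℕ) (hS : ℓ < (S.sort (· ≤ ·)).length) (hT : ℓ < (T.sort (· ≤ ·)).length),
      (S.sort (· ≤ ·)).get ⟨ℓ, hS⟩ ≤ (T.sort (· ≤ ·)).get ⟨ℓ, hT⟩

/-- `f ≼ g` iff there is a monomial `g*` with `f ≼_sh g* ≼_w g`. -/
def pre (m : ℕ) (S T : Finset (Fin m)) : Prop :=
  ∃ U : Finset (Fin m), shLE m S U ∧ U ⊆ T

/-- A decreasing set of monomials. -/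
def Decreasing (m : ℕ) (I : Set (Finset (Fin m))) : Prop :=
  ∀ f ∈ I, ∀ g : Finset (Fin m), pre m g f → g ∈ I

/-- The affine map `u ↦ B u + ε` on `F_2^m`. -/
def affMap (m : ℕ) (B : Fin m → Fin m → ZMod 2) (ε : Point m) (u : Point m) : Point m :=
  fun i => (∑ j, B i j * u j) + ε i

/-- `B` is lower triangular with unit diagonal. -/
def IsLT (m : ℕ) (B : Fin m → Fin m → ZMod 2) : Prop :=
  (∀ i, B i i = 1) ∧ ∀ i j : Fin m, i < j → B i j = 0

/-- The action of `(B,ε) ∈ LTA(m,2)` on `R_m`: substitute `x_i ↦ x_i + Σ_{j<i} b_{i,j} x_j + ε_i`.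
In the function representation this is precomposition with the affine map. -/
def act (m : ℕ) (B : Fin m → Fin m → ZMod 2) (ε : Point m) (P : Fn m) : Fn m :=
  fun u => P (affMap m B ε u)

/-- The orbit `LTA(m,2)·P`. -/
def orbit (m : ℕ) (P : Fn m) : Set (Fn m) :=
  {Q | ∃ B ε, IsLT m B ∧ Q = act m B ε P}

/-- Membership in the subgroup `LTA(m,2)_g` for the monomial `g` with index set `S`:
`ε_i = 0` if `i ∉ ind(g)`, and `b_{i,j} = 0` (off the diagonal) if `i ∉ ind(g)` or `j ∈ ind(g)`. -/
def IsLTsub (m : ℕ) (S : Finset (Fin m)) (B : Fin m → Fin m → ZMod 2) (ε : Point m) : Prop :=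
  IsLT m B ∧ (∀ i, i ∉ S → ε i = 0) ∧
    ∀ i j : Fin m, j ≠ i → (i ∉ S ∨ j ∈ S) → B i j = 0

/-- The orbit `LTA(m,2)_g · P` where `S = ind(g)`. -/
def orbitSub (m : ℕ) (S : Finset (Fin m)) (P : Fn m) : Set (Fn m) :=
  {Q | ∃ B ε, IsLTsub m S B ε ∧ Q = act m B ε P}

/-- `λ_f(i) = |{j : j < i, j ∉ ind(f)}|` where `S = ind(f)`. -/
def lam (m : ℕ) (S : Finset (Fin m)) (i : Fin m) : ℕ :=
  (Finset.univ.filter fun j => j < i ∧ j ∉ S).card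

/-- `|λ_f(g)| = Σ_{i ∈ ind(g)} λ_f(i)`. -/
def lamSum (m : ℕ) (S T : Finset (Fin m)) : ℕ := ∑ i ∈ T, lam m S i

/-- The affine form `c + Σ_i a_i x_i`. -/
def affForm (m : ℕ) (c : ZMod 2) (a : Point m) : Fn m := fun u => c + ∑ i, a i * u i

/-- `deg(P) ≤ r`: `P` lies in the span of the (multilinear) monomials of degree at most `r`. -/
def degLE (m : ℕ) (P : Fn m) (r : ℕ) : Prop :=
  P ∈ Submodule.span (ZMod 2)
    {Q : Fn m | ∃ S : Finset (Fin m), S.card ≤ r ∧ Q = monFn m S}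



/-! ### Auxiliary material for `stmt6` -/

lemma zmod2_mul_eq_one (x y : ZMod 2) : x * y = 1 ↔ x = 1 ∧ y = 1 := by
  revert x y; decide

lemma zmod2_prod_eq_one {ι : Type*} (s : Finset ι) (f : ι → ZMod 2) :
    ∏ i ∈ s, f i = 1 ↔ ∀ i ∈ s, f i = 1 := by
  classical
  induction s using Finset.induction_on with
  | empty => simp
  | insert _ _ h ih =>
      rw [Finset.prod_insert h, zmod2_mul_eq_one, ih, Finset.forall_mem_insert]

/-- The matrix of linear parts of the affine forms. -/
def linmat (m r : ℕ) (a : ℕ → Point m) : Matrix (Fin (r + 2)) (Fin m) (ZMod 2) :=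
  Matrix.of fun j i => a j.1 i

/-- The evaluation map `u ↦ (y_1(u), …, y_{r+2}(u))`. -/
def phimap (m r : ℕ) (c : ℕ → ZMod 2) (a : ℕ → Point m) (u : Point m) :
    Fin (r + 2) → ZMod 2 :=
  fun j => affForm m (c j.1) (a j.1) u

lemma linmat_surj (m r : ℕ) (a : ℕ → Point m)
    (hli : LinearIndependent (ZMod 2) (fun j : Fin (r + 2) => a j.1)) :
    Function.Surjective (linmat m r a).mulVecLin := by
  have hliM : LinearIndependent (ZMod 2) (linmat m r a) := by
    have he : (linmat m r a : Fin (r + 2) → Fin m → ZMod 2)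
        = fun j : Fin (r + 2) => a j.1 := rfl
    rw [he]; exact hli
  have hrank : (linmat m r a).rank = r + 2 := by
    have h := hliM.rank_matrix; rw [Fintype.card_fin] at h; exact h
  rw [← LinearMap.range_eq_top]
  apply Submodule.eq_top_of_finrank_eq
  show (linmat m r a).rank = _
  rw [hrank, Module.finrank_fintype_fun_eq_card, Fintype.card_fin]

lemma phimap_eq (m r : ℕ) (c : ℕ → ZMod 2) (a : ℕ → Point m) (u : Point m) :
    phimap m r c a u = (fun j : Fin (r + 2) => c j.1) + (linmat m r a).mulVec u := by
  funext j
  simp [phimap, affForm, linmat, Matrix.mulVec, dotProduct]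

/-- Index embedding `Fin 4 → Fin (r+2)`, `k ↦ r - 2 + k`. -/
def idxF (r : ℕ) (hr : 2 ≤ r) (k : Fin 4) : Fin (r + 2) :=
  ⟨r - 2 + k.1, by have := k.2; omega⟩

/-- Index retraction `Fin (r+2) → Fin 4`, `j ↦ j - (r - 2)`. -/
def idxG (r : ℕ) (j : Fin (r + 2)) : Fin 4 := ⟨j.1 - (r - 2), by have := j.2; omega⟩

lemma cardQ4 : (Finset.univ.filter fun w : Fin 4 → ZMod 2 =>
    w ⟨0, by omega⟩ * w ⟨1, by omega⟩ + w ⟨2, by omega⟩ * w ⟨3, by omega⟩ = 1).card = 6 := by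
  decide

/-- Cardinality of the model set in `F_2^{r+2}`. -/
lemma cardT (r : ℕ) (hr : 2 ≤ r) (h1 : r - 2 < r + 2) (h2 : r - 1 < r + 2)
    (h3 : r < r + 2) (h4 : r + 1 < r + 2) :
    (Finset.univ.filter fun v : Fin (r + 2) → ZMod 2 =>
      (∀ j : Fin (r + 2), j.1 < r - 2 → v j = 1) ∧
        v ⟨r - 2, h1⟩ * v ⟨r - 1, h2⟩ + v ⟨r, h3⟩ * v ⟨r + 1, h4⟩ = 1).card = 6 := by
  rw [← cardQ4]
  apply Finset.card_nbij' (i := fun v k => v (idxF r hr k))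
    (j := fun w j => if j.1 < r - 2 then 1 else w (idxG r j))
  · intro v hv
    simp only [Finset.mem_coe, Finset.mem_filter, Finset.mem_univ, true_and] at hv ⊢
    obtain ⟨hall, hquad⟩ := hv
    have e0 : idxF r hr ⟨0, by omega⟩ = ⟨r - 2, h1⟩ := Fin.ext (by simp [idxF])
    have e1 : idxF r hr ⟨1, by omega⟩ = ⟨r - 1, h2⟩ := Fin.ext (by simp [idxF]; omega)
    have e2 : idxF r hr ⟨2, by omega⟩ = ⟨r, h3⟩ := Fin.ext (by simp [idxF]; omega)
    have e3 : idxF r hr ⟨3, by omega⟩ = ⟨r + 1, h4⟩ := Fin.ext (by simp [idxF]; omega)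
    rw [e0, e1, e2, e3]
    exact hquad
  · intro w hw
    simp only [Finset.mem_coe, Finset.mem_filter, Finset.mem_univ, true_and] at hw ⊢
    constructor
    · intro j hj
      rw [if_pos hj]
    · rw [if_neg (by omega), if_neg (by omega), if_neg (by omega), if_neg (by omega)]
      have f0 : idxG r ⟨r - 2, h1⟩ = ⟨0, by omega⟩ := Fin.ext (by simp [idxG])
      have f1 : idxG r ⟨r - 1, h2⟩ = ⟨1, by omega⟩ := Fin.ext (by simp [idxG]; omega)
      have f2 : idxG r ⟨r, h3⟩ = ⟨2, by omega⟩ := Fin.ext (by simp [idxG]; omega)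
      have f3 : idxG r ⟨r + 1, h4⟩ = ⟨3, by omega⟩ := Fin.ext (by simp [idxG]; omega)
      rw [f0, f1, f2, f3]
      exact hw
  · intro v hv
    simp only [Finset.mem_coe, Finset.mem_filter, Finset.mem_univ, true_and] at hv
    funext j
    beta_reduce
    by_cases hlt : j.1 < r - 2
    · rw [if_pos hlt]
      exact (hv.1 j hlt).symm
    · rw [if_neg hlt]
      exact congrArg v (Fin.ext (by simp [idxF, idxG]; omega))
  · intro w hw
    funext k
    show (if (idxF r hr k).1 < r - 2 then (1 : ZMod 2) else w (idxG r (idxF r hr k))) = w k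
    rw [if_neg (by simp [idxF])]
    refine congrArg w (Fin.ext ?_)
    have := k.2
    simp [idxF, idxG]

/-- for `r ≥ 2`, `m ≥ r+2` and linearly independent affine forms
`y_1,…,y_{r+2}` (0-indexed here), the weight of
`ev(y_1⋯y_{r-2}(y_{r-1}y_r + y_{r+1}y_{r+2}))` is `3·2^(m-r-1)`. -/
theorem stmt6 (m r : ℕ) (hm : 1 ≤ m) (hr : 2 ≤ r) (hmr : r + 2 ≤ m)
    (c : ℕ → ZMod 2) (a : ℕ → Point m)
    (hli : LinearIndependent (ZMod 2) (fun j : Fin (r + 2) => a j.1)) :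
    wt m ((∏ j ∈ Finset.range (r - 2), affForm m (c j) (a j)) *
        (affForm m (c (r - 2)) (a (r - 2)) * affForm m (c (r - 1)) (a (r - 1)) +
          affForm m (c r) (a r) * affForm m (c (r + 1)) (a (r + 1)))) =
      3 * 2 ^ (m - r - 1) := by
  have hi1 : r - 2 < r + 2 := by omega
  have hi2 : r - 1 < r + 2 := by omega
  have hi3 : r < r + 2 := by omega
  have hi4 : r + 1 < r + 2 := by omega
  set M := linmat m r a with hM
  set φ := phimap m r c a with hφ
  have hsurj : Function.Surjective M.mulVecLin := linmat_surj m r a hli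
  -- all fibers of φ have the same cardinality
  set k := (Finset.univ.filter fun u : Point m => M.mulVec u = 0).card with hkdef
  have hfib : ∀ v, (Finset.univ.filter fun u : Point m => φ u = v).card = k := by
    intro v
    obtain ⟨u0, hu0⟩ := hsurj (v - fun j : Fin (r + 2) => c j.1)
    rw [Matrix.mulVecLin_apply] at hu0
    rw [hkdef]
    apply Finset.card_nbij' (i := fun u => u - u0) (j := fun u => u + u0)
    · intro u hu
      simp only [Finset.mem_coe, Finset.mem_filter, Finset.mem_univ, true_and] at hu ⊢
      rw [hφ, phimap_eq] at hu
      have h2 : M.mulVec u = v - fun j : Fin (r + 2) => c j.1 := eq_sub_of_add_eq' hu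
      rw [Matrix.mulVec_sub, h2, hu0, sub_self]
    · intro u hu
      simp only [Finset.mem_coe, Finset.mem_filter, Finset.mem_univ, true_and] at hu ⊢
      rw [hφ, phimap_eq, Matrix.mulVec_add, hu, hu0]
      abel
    · intro u _; simp
    · intro u _; simp
  have hpoint : Fintype.card (Point m) = 2 ^ m := by
    simp [Fintype.card_fun]
  have htarget : Fintype.card (Fin (r + 2) → ZMod 2) = 2 ^ (r + 2) := by
    simp [Fintype.card_fun]
  have hsplit : 2 ^ m = 2 ^ (r + 2) * k := by
    have h := Finset.card_eq_sum_card_fiberwise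
      (s := (Finset.univ : Finset (Point m)))
      (t := (Finset.univ : Finset (Fin (r + 2) → ZMod 2))) (f := φ)
      (fun u _ => Finset.mem_univ _)
    rw [Finset.card_univ, hpoint] at h
    calc 2 ^ m = ∑ v : Fin (r + 2) → ZMod 2,
          (Finset.univ.filter fun u : Point m => φ u = v).card := h
      _ = ∑ _v : Fin (r + 2) → ZMod 2, k := Finset.sum_congr rfl fun v _ => hfib v
      _ = 2 ^ (r + 2) * k := by
          rw [Finset.sum_const, Finset.card_univ, htarget, smul_eq_mul]
  have hk : k = 2 ^ (m - r - 2) := by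
    have hpow : (2 : ℕ) ^ m = 2 ^ (r + 2) * 2 ^ (m - r - 2) := by
      rw [← pow_add]; congr 1; omega
    exact Nat.eq_of_mul_eq_mul_left (by positivity) (hsplit.symm.trans hpow)
  -- key pointwise equivalence
  have hkey : ∀ u : Point m,
      ((∏ j ∈ Finset.range (r - 2), affForm m (c j) (a j)) *
        (affForm m (c (r - 2)) (a (r - 2)) * affForm m (c (r - 1)) (a (r - 1)) +
          affForm m (c r) (a r) * affForm m (c (r + 1)) (a (r + 1)))) u = 1 ↔
      ((∀ j : Fin (r + 2), j.1 < r - 2 → φ u j = 1) ∧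
        φ u ⟨r - 2, hi1⟩ * φ u ⟨r - 1, hi2⟩ + φ u ⟨r, hi3⟩ * φ u ⟨r + 1, hi4⟩ = 1) := by
    intro u
    rw [Pi.mul_apply, Pi.add_apply, Pi.mul_apply, Pi.mul_apply, Finset.prod_apply,
      zmod2_mul_eq_one, zmod2_prod_eq_one]
    constructor
    · rintro ⟨hA, hB⟩
      exact ⟨fun j hj => hA j.1 (Finset.mem_range.2 hj), hB⟩
    · rintro ⟨hA, hB⟩
      refine ⟨fun j hj => ?_, hB⟩
      have hj' := Finset.mem_range.1 hj
      exact hA ⟨j, by omega⟩ hj'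
  set T := (Finset.univ.filter fun v : Fin (r + 2) → ZMod 2 =>
      (∀ j : Fin (r + 2), j.1 < r - 2 → v j = 1) ∧
        v ⟨r - 2, hi1⟩ * v ⟨r - 1, hi2⟩ + v ⟨r, hi3⟩ * v ⟨r + 1, hi4⟩ = 1) with hT
  unfold wt
  rw [Finset.card_eq_sum_card_fiberwise (f := φ) (t := T)
    (fun u hu => by
      simp only [hT, Finset.mem_coe, Finset.mem_filter, Finset.mem_univ, true_and] at hu ⊢
      exact (hkey u).1 hu)]
  have hinner : ∀ v ∈ T,
      ((Finset.univ.filter fun u : Point m =>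
          ((∏ j ∈ Finset.range (r - 2), affForm m (c j) (a j)) *
            (affForm m (c (r - 2)) (a (r - 2)) * affForm m (c (r - 1)) (a (r - 1)) +
              affForm m (c r) (a r) * affForm m (c (r + 1)) (a (r + 1)))) u = 1).filter
        fun u => φ u = v).card = k := by
    intro v hv
    rw [Finset.filter_filter]
    have hset : (Finset.univ.filter fun u : Point m =>
        ((∏ j ∈ Finset.range (r - 2), affForm m (c j) (a j)) *
          (affForm m (c (r - 2)) (a (r - 2)) * affForm m (c (r - 1)) (a (r - 1)) +
            affForm m (c r) (a r) * affForm m (c (r + 1)) (a (r + 1)))) u = 1 ∧ φ u = v)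
        = Finset.univ.filter fun u : Point m => φ u = v := by
      ext u
      simp only [Finset.mem_filter, Finset.mem_univ, true_and, and_iff_right_iff_imp]
      intro h
      rw [hkey u, h]
      simpa only [hT, Finset.mem_filter, Finset.mem_univ, true_and] using hv
    rw [hset, hfib v]
  rw [Finset.sum_congr rfl hinner, Finset.sum_const, smul_eq_mul, hk]
  have hTcard : T.card = 6 := by rw [hT]; exact cardT r hr hi1 hi2 hi3 hi4
  rw [hTcard]
  have he : m - r - 1 = (m - r - 2) + 1 := by omega
  rw [he, pow_succ]; ring
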